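/- arXiv:1104.0696 — 2 statements merged into one kernel-verified Lean document; each statement's English description precedes it below -/
import Mathlib

section
/- The paraparticle realization map preserves commutators of even elements: for all complex matrices A, A' ∈ M_{m×m}(ℂ) and D, D' ∈ M_{n×n}(ℂ), one has [J₀(A,D), J₀(A',D')] = J₀(AA' − A'A, DD' − D'D) in the algebra 𝒜. -/
/-- The commutator `[x, y] = x*y - y*x`. -/
def pbComm {A : Type*} [Ring A] (x y : A) : A := x * y - y * x

/-- The anticommutator `{x, y} = x*y + y*x`. -/
def pbAComm {A : Type*} [Ring A] (x y : A) : A := x * y + y * x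

/-- Kronecker delta with values in `ℂ`. -/
def kd {I : Type*} [DecidableEq I] (i j : I) : ℂ := if i = j then 1 else 0

/-- A sign, i.e. `+1` or `-1`, regarded as an integer. -/
def IsSign (x : ℤ) : Prop := x = 1 ∨ x = -1

/-- The defining trilinear relations of the relative parabose set `P_BF`,
for a family `b` of parabosonic and `f` of parafermionic generators. -/
structure PBFRelations {A : Type*} [Ring A] [Algebra ℂ A]
    {I J : Type*} [DecidableEq I] [DecidableEq J]
    (b : I → ℤ → A) (f : J → ℤ → A) : Prop where
  rel_bbb : ∀ (i j k : I) (ξ η ε : ℤ), IsSign ξ → IsSign η → IsSign ε →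
    pbComm (pbAComm (b i ξ) (b j η)) (b k ε)
      = (((ε - η : ℤ) : ℂ) * kd j k) • b i ξ + (((ε - ξ : ℤ) : ℂ) * kd i k) • b j η
  rel_fff : ∀ (α β γ : J) (ξ η ε : ℤ), IsSign ξ → IsSign η → IsSign ε →
    pbComm (pbComm (f α ξ) (f β η)) (f γ ε)
      = ((((ε - η) ^ 2 : ℤ) : ℂ) / 2 * kd β γ) • f α ξ
        - ((((ε - ξ) ^ 2 : ℤ) : ℂ) / 2 * kd α γ) • f β η
  rel_bbf : ∀ (i j : I) (α : J) (ξ η ε : ℤ), IsSign ξ → IsSign η → IsSign ε →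
    pbComm (pbAComm (b i ξ) (b j η)) (f α ε) = 0
  rel_ffb : ∀ (α β : J) (i : I) (ξ η ε : ℤ), IsSign ξ → IsSign η → IsSign ε →
    pbComm (pbComm (f α ξ) (f β η)) (b i ε) = 0
  rel_fbb : ∀ (α : J) (i j : I) (ξ η ε : ℤ), IsSign ξ → IsSign η → IsSign ε →
    pbComm (pbAComm (f α ξ) (b i η)) (b j ε) = (((ε - η : ℤ) : ℂ) * kd i j) • f α ξ
  rel_bff : ∀ (i : I) (α β : J) (ξ η ε : ℤ), IsSign ξ → IsSign η → IsSign ε →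
    pbAComm (pbAComm (b i ξ) (f α η)) (f β ε) = ((((ε - η) ^ 2 : ℤ) : ℂ) / 2 * kd α β) • b i ξ


open scoped BigOperators

/-- The even part of the paraparticle realization map:
`J₀(A,D) = ½ Σ A_{kl} {b_k^+, b_l^-} + ½ Σ D_{αβ} [f_α^+, f_β^-]`. -/
noncomputable def J0 {𝒜 : Type*} [Ring 𝒜] [Algebra ℂ 𝒜] {m n : ℕ}
    (b : Fin m → ℤ → 𝒜) (f : Fin n → ℤ → 𝒜)
    (A : Matrix (Fin m) (Fin m) ℂ) (D : Matrix (Fin n) (Fin n) ℂ) : 𝒜 :=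
  (1 / 2 : ℂ) • (∑ k, ∑ l, A k l • pbAComm (b k 1) (b l (-1)))
    + (1 / 2 : ℂ) • (∑ α, ∑ β, D α β • pbComm (f α 1) (f β (-1)))

/-- The odd part of the paraparticle realization map:
`J₁(B,C) = ½ Σ ( B_{kα} {b_k^+, f_α^-} + C_{αk} {f_α^+, b_k^-} )`. -/
noncomputable def J1 {𝒜 : Type*} [Ring 𝒜] [Algebra ℂ 𝒜] {m n : ℕ}
    (b : Fin m → ℤ → 𝒜) (f : Fin n → ℤ → 𝒜)
    (B : Matrix (Fin m) (Fin n) ℂ) (C : Matrix (Fin n) (Fin m) ℂ) : 𝒜 :=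
  (1 / 2 : ℂ) • (∑ k, ∑ α, (B k α • pbAComm (b k 1) (f α (-1)) + C α k • pbAComm (f α 1) (b k (-1))))

/-!
The elements `½{b_k^+, b_l^-}` and `½[f_α^+, f_β^-]` satisfy the commutation relations of
the matrix units of `𝔤𝔩_m` and `𝔤𝔩_n`: bracketing one of them with another (anti)commutator
of generators is computed by the Leibniz rule from the trilinear relations. Likewise every
bosonic one commutes with every fermionic one. So `J₀` is the sum of two Lie algebra homomorphisms with commuting
images, hence itself a Lie algebra homomorphism.
-/

open Finset

attribute [local instance] LieRing.ofAssociativeRing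

section GLRelations

variable {L ι : Type*} [LieRing L]

def SatisfiesGLRelations [DecidableEq ι] (e : ι → ι → L) : Prop :=
  ∀ i j k l, ⁅e i j, e k l⁆ = (if j = k then e i l else 0) - (if i = l then e k j else 0)

variable {R : Type*} [CommRing R] [LieAlgebra R L] [Fintype ι]

theorem SatisfiesGLRelations.lie_sum_smul [DecidableEq ι] {e : ι → ι → L}
    (he : SatisfiesGLRelations e) (A B : Matrix ι ι R) :
    ⁅∑ i, ∑ j, A i j • e i j, ∑ i, ∑ j, B i j • e i j⁆ = ∑ i, ∑ j, (A * B - B * A) i j • e i j := by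
  have expand : ⁅∑ i, ∑ j, A i j • e i j, ∑ k, ∑ l, B k l • e k l⁆
      = ∑ i, ∑ j, ∑ k, ∑ l, (A i j * B k l) • ⁅e i j, e k l⁆ := by
    simp_rw [sum_lie, smul_lie, lie_sum, lie_smul, smul_sum, smul_smul]
  simp only [expand, he _ _ _ _, smul_sub, sum_sub_distrib, Matrix.sub_apply, sub_smul, smul_ite,
    smul_zero, Matrix.mul_apply, sum_smul]
  congr 1
  · refine sum_congr rfl fun i _ => ?_
    simp_rw [sum_comm (s := univ) (t := univ) (f := fun k l => if _ = k then _ else _),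
      sum_ite_eq, mem_univ, if_true]
    exact sum_comm
  · simp_rw [sum_ite_eq, mem_univ, if_true]
    rw [sum_comm_cycle]
    refine sum_congr rfl fun k _ => ?_
    rw [sum_comm]
    exact sum_congr rfl fun j _ => sum_congr rfl fun i _ => by rw [mul_comm]

theorem lie_sum_smul_sum_smul_eq_zero {κ : Type*} [Fintype κ] {e : ι → ι → L} {e' : κ → κ → L}
    (h : ∀ i j k l, ⁅e i j, e' k l⁆ = 0) (A : Matrix ι ι R) (B : Matrix κ κ R) :
    ⁅∑ i, ∑ j, A i j • e i j, ∑ k, ∑ l, B k l • e' k l⁆ = 0 := by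
  simp only [sum_lie, lie_sum, smul_lie, lie_smul, h, smul_zero, sum_const_zero]

end GLRelations

section Realization

variable {𝒜 : Type*} [Ring 𝒜]

theorem pbComm_eq_lie (x y : 𝒜) : pbComm x y = ⁅x, y⁆ := (Ring.lie_def x y).symm

theorem lie_pbAComm (x y z : 𝒜) : ⁅x, pbAComm y z⁆ = pbAComm ⁅x, y⁆ z + pbAComm y ⁅x, z⁆ := by
  simp only [Ring.lie_def, pbAComm]
  noncomm_ring

theorem pbAComm_zero_left (x : 𝒜) : pbAComm 0 x = 0 := by
  simp only [pbAComm, zero_mul, mul_zero, add_zero]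

theorem pbAComm_zero_right (x : 𝒜) : pbAComm x 0 = 0 := by
  simp only [pbAComm, zero_mul, mul_zero, add_zero]

theorem pbAComm_smul_left {R : Type*} [CommSemiring R] [Algebra R 𝒜] (c : R) (x y : 𝒜) :
    pbAComm (c • x) y = c • pbAComm x y := by
  simp only [pbAComm, smul_mul_assoc, mul_smul_comm, smul_add]

theorem pbAComm_smul_right {R : Type*} [CommSemiring R] [Algebra R 𝒜] (c : R) (x y : 𝒜) :
    pbAComm x (c • y) = c • pbAComm x y := by
  simp only [pbAComm, smul_mul_assoc, mul_smul_comm, smul_add]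

theorem isSign_one : IsSign 1 := Or.inl rfl

theorem isSign_neg_one : IsSign (-1) := Or.inr rfl

variable [Algebra ℂ 𝒜] {I J : Type*}

noncomputable def bosonUnit (b : I → ℤ → 𝒜) (k l : I) : 𝒜 :=
  (1 / 2 : ℂ) • pbAComm (b k 1) (b l (-1))

noncomputable def fermionUnit (f : J → ℤ → 𝒜) (α β : J) : 𝒜 :=
  (1 / 2 : ℂ) • ⁅f α 1, f β (-1)⁆

namespace PBFRelations

variable [DecidableEq I] [DecidableEq J] {b : I → ℤ → 𝒜} {f : J → ℤ → 𝒜}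

theorem lie_bb_b_one (h : PBFRelations b f) (k l k' : I) :
    ⁅pbAComm (b k 1) (b l (-1)), b k' 1⁆ = if l = k' then (2 : ℂ) • b k 1 else 0 := by
  rw [← pbComm_eq_lie, h.rel_bbb k l k' 1 (-1) 1 isSign_one isSign_neg_one isSign_one]
  split_ifs <;> norm_num [kd, *]

theorem lie_bb_b_neg_one (h : PBFRelations b f) (k l l' : I) :
    ⁅pbAComm (b k 1) (b l (-1)), b l' (-1)⁆ = if k = l' then (-2 : ℂ) • b l (-1) else 0 := by
  rw [← pbComm_eq_lie, h.rel_bbb k l l' 1 (-1) (-1) isSign_one isSign_neg_one isSign_neg_one]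
  split_ifs <;> norm_num [kd, *]

theorem lie_ff_f_one (h : PBFRelations b f) (α β α' : J) :
    ⁅⁅f α 1, f β (-1)⁆, f α' 1⁆ = if β = α' then (2 : ℂ) • f α 1 else 0 := by
  rw [← pbComm_eq_lie, ← pbComm_eq_lie,
    h.rel_fff α β α' 1 (-1) 1 isSign_one isSign_neg_one isSign_one]
  split_ifs <;> norm_num [kd, *]

theorem lie_ff_f_neg_one (h : PBFRelations b f) (α β β' : J) :
    ⁅⁅f α 1, f β (-1)⁆, f β' (-1)⁆ = if α = β' then (-2 : ℂ) • f β (-1) else 0 := by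
  rw [← pbComm_eq_lie, ← pbComm_eq_lie,
    h.rel_fff α β β' 1 (-1) (-1) isSign_one isSign_neg_one isSign_neg_one]
  split_ifs <;> norm_num [kd, *]

theorem lie_bb_f (h : PBFRelations b f) (k l : I) (α : J) {ε : ℤ} (hε : IsSign ε) :
    ⁅pbAComm (b k 1) (b l (-1)), f α ε⁆ = 0 := by
  rw [← pbComm_eq_lie, h.rel_bbf k l α 1 (-1) ε isSign_one isSign_neg_one hε]

theorem satisfiesGLRelations_bosonUnit (h : PBFRelations b f) :
    SatisfiesGLRelations (bosonUnit b) := by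
  intro k l k' l'
  simp only [bosonUnit, smul_lie, lie_smul, lie_pbAComm, h.lie_bb_b_one,
    h.lie_bb_b_neg_one]
  split_ifs <;>
    simp only [pbAComm_smul_left, pbAComm_smul_right, pbAComm_zero_left, pbAComm_zero_right] <;>
    module

theorem satisfiesGLRelations_fermionUnit (h : PBFRelations b f) :
    SatisfiesGLRelations (fermionUnit f) := by
  intro α β α' β'
  simp only [fermionUnit, smul_lie, lie_smul, leibniz_lie, h.lie_ff_f_one,
    h.lie_ff_f_neg_one]
  split_ifs <;> simp only [smul_lie, lie_smul, zero_lie, lie_zero] <;> module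

theorem lie_bosonUnit_fermionUnit (h : PBFRelations b f) (k l : I) (α β : J) :
    ⁅bosonUnit b k l, fermionUnit f α β⁆ = 0 := by
  simp only [bosonUnit, fermionUnit, smul_lie, lie_smul, leibniz_lie,
    h.lie_bb_f _ _ _ isSign_one, h.lie_bb_f _ _ _ isSign_neg_one,
    zero_lie, lie_zero, add_zero, smul_zero]

end PBFRelations

theorem J0_eq_sum_bosonUnit_add_sum_fermionUnit {m n : ℕ} (b : Fin m → ℤ → 𝒜)
    (f : Fin n → ℤ → 𝒜) (A : Matrix (Fin m) (Fin m) ℂ) (D : Matrix (Fin n) (Fin n) ℂ) :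
    J0 b f A D = ∑ k, ∑ l, A k l • bosonUnit b k l + ∑ α, ∑ β, D α β • fermionUnit f α β := by
  simp only [J0, bosonUnit, fermionUnit, pbComm_eq_lie, smul_sum, smul_comm (1 / 2 : ℂ)]

end Realization

theorem J0_comm_J0_general {𝒜 : Type*} [Ring 𝒜] [Algebra ℂ 𝒜] {m n : ℕ}
    (b : Fin m → ℤ → 𝒜) (f : Fin n → ℤ → 𝒜) (h : PBFRelations b f)
    (A A' : Matrix (Fin m) (Fin m) ℂ) (D D' : Matrix (Fin n) (Fin n) ℂ) :
    pbComm (J0 b f A D) (J0 b f A' D') = J0 b f (A * A' - A' * A) (D * D' - D' * D) := by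
  have boson_fermion := lie_sum_smul_sum_smul_eq_zero (R := ℂ) h.lie_bosonUnit_fermionUnit
  have fermion_boson (D : Matrix (Fin n) (Fin n) ℂ) (A : Matrix (Fin m) (Fin m) ℂ) :
      ⁅∑ α, ∑ β, D α β • fermionUnit f α β, ∑ k, ∑ l, A k l • bosonUnit b k l⁆ = 0 := by
    rw [← lie_skew, boson_fermion, neg_zero]
  rw [pbComm_eq_lie, J0_eq_sum_bosonUnit_add_sum_fermionUnit,
    J0_eq_sum_bosonUnit_add_sum_fermionUnit, J0_eq_sum_bosonUnit_add_sum_fermionUnit, add_lie, lie_add, lie_add, boson_fermion,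
    fermion_boson, add_zero, zero_add, h.satisfiesGLRelations_bosonUnit.lie_sum_smul,
    h.satisfiesGLRelations_fermionUnit.lie_sum_smul]

/-- The paraparticle realization map preserves commutators of even elements. -/
theorem J0_comm_J0 {𝒜 : Type*} [Ring 𝒜] [Algebra ℂ 𝒜] {m n : ℕ}
    (hm : 0 < m) (hn : 0 < n)
    (b : Fin m → ℤ → 𝒜) (f : Fin n → ℤ → 𝒜) (h : PBFRelations b f)
    (A A' : Matrix (Fin m) (Fin m) ℂ) (D D' : Matrix (Fin n) (Fin n) ℂ) :
    pbComm (J0 b f A D) (J0 b f A' D') = J0 b f (A * A' - A' * A) (D * D' - D' * D) :=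
  J0_comm_J0_general b f h A A' D D'
end

section
/- The paraparticle realization map preserves the bracket of an even with an odd element: for all complex matrices A ∈ M_{m×m}(ℂ), D ∈ M_{n×n}(ℂ), B ∈ M_{m×n}(ℂ), C ∈ M_{n×m}(ℂ), one has [J₀(A,D), J₁(B,C)] = J₁(AB − BD, DC − CA) in the algebra 𝒜. -/
open scoped BigOperators

/-! The commutator with `J₀(A,D)` is a derivation, so by the Leibniz rule and the trilinear
relations it maps each odd generator `{b_i^+, f_γ^-}`, `{f_γ^+, b_i^-}` to a combination of
generators of the same kind: the summand `{b_k^+, b_l^-}` shifts a bosonic index and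
`[f_α^+, f_β^-]` a fermionic one, each with weight `±2 δ`. Paired with the coefficients `B` and
`C`, these shifts are exactly multiplication by `A` and `D` on either side. -/

open Finset

theorem Matrix.sum_sum_smul_sum_smul_left {R M ι κ ν : Type*} [CommSemiring R] [AddCommMonoid M]
    [Module R M] [Fintype ι] [Fintype κ] [Fintype ν]
    (A : Matrix ν ι R) (N : Matrix ι κ R) (X : ν → κ → M) :
    ∑ i, ∑ j, N i j • ∑ k, A k i • X k j = ∑ k, ∑ j, (A * N) k j • X k j := by
  simp only [Matrix.mul_apply, smul_sum, sum_smul, smul_smul]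
  rw [sum_comm, sum_congr rfl fun _ _ => sum_comm, sum_comm]
  simp only [mul_comm]

theorem Matrix.sum_sum_smul_sum_smul_right {R M ι κ ν : Type*} [CommSemiring R] [AddCommMonoid M]
    [Module R M] [Fintype ι] [Fintype κ] [Fintype ν]
    (N : Matrix ι κ R) (D : Matrix κ ν R) (X : ι → ν → M) :
    ∑ i, ∑ j, N i j • ∑ l, D j l • X i l = ∑ i, ∑ l, (N * D) i l • X i l := by
  simp only [Matrix.mul_apply, smul_sum, sum_smul, smul_smul]
  exact sum_congr rfl fun i _ => sum_comm

section Brackets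

variable {𝒜 : Type*} [Ring 𝒜]

theorem pbComm_add_left (x y z : 𝒜) : pbComm (x + y) z = pbComm x z + pbComm y z := by
  simp only [pbComm, add_mul, mul_add]; abel

theorem pbComm_add_right (x y z : 𝒜) : pbComm x (y + z) = pbComm x y + pbComm x z := by
  simp only [pbComm, add_mul, mul_add]; abel

theorem pbComm_sum_left {ι : Type*} (s : Finset ι) (g : ι → 𝒜) (y : 𝒜) :
    pbComm (∑ i ∈ s, g i) y = ∑ i ∈ s, pbComm (g i) y := by
  simp only [pbComm, sum_mul, mul_sum, sum_sub_distrib]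

theorem pbComm_sum_right {ι : Type*} (s : Finset ι) (g : ι → 𝒜) (x : 𝒜) :
    pbComm x (∑ i ∈ s, g i) = ∑ i ∈ s, pbComm x (g i) := by
  simp only [pbComm, sum_mul, mul_sum, sum_sub_distrib]

theorem pbComm_pbAComm (x u v : 𝒜) :
    pbComm x (pbAComm u v) = pbAComm (pbComm x u) v + pbAComm u (pbComm x v) := by
  simp only [pbComm, pbAComm]; noncomm_ring

variable [Algebra ℂ 𝒜]

theorem pbComm_smul_left (c : ℂ) (x y : 𝒜) : pbComm (c • x) y = c • pbComm x y := by
  simp only [pbComm, smul_mul_assoc, mul_smul_comm, smul_sub]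

theorem pbComm_smul_right (c : ℂ) (x y : 𝒜) : pbComm x (c • y) = c • pbComm x y := by
  simp only [pbComm, smul_mul_assoc, mul_smul_comm, smul_sub]

variable {I J : Type*} [DecidableEq I] [DecidableEq J]
  {b : I → ℤ → 𝒜} {f : J → ℤ → 𝒜}

namespace PBFRelations

variable (h : PBFRelations b f)
include h

theorem pbComm_bb_bf (k l i : I) (γ : J) :
    pbComm (pbAComm (b k 1) (b l (-1))) (pbAComm (b i 1) (f γ (-1)))
      = (2 * kd l i) • pbAComm (b k 1) (f γ (-1)) := by
  rw [pbComm_pbAComm, h.rel_bbb k l i 1 (-1) 1 (.inl rfl) (.inr rfl) (.inl rfl),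
    h.rel_bbf k l γ 1 (-1) (-1) (.inl rfl) (.inr rfl) (.inr rfl)]
  simp only [pbAComm, add_mul, mul_add, smul_mul_assoc, mul_smul_comm, zero_mul, mul_zero]
  push_cast
  module

theorem pbComm_bb_fb (k l i : I) (γ : J) :
    pbComm (pbAComm (b k 1) (b l (-1))) (pbAComm (f γ 1) (b i (-1)))
      = (-2 * kd k i) • pbAComm (f γ 1) (b l (-1)) := by
  rw [pbComm_pbAComm, h.rel_bbb k l i 1 (-1) (-1) (.inl rfl) (.inr rfl) (.inr rfl),
    h.rel_bbf k l γ 1 (-1) 1 (.inl rfl) (.inr rfl) (.inl rfl)]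
  simp only [pbAComm, add_mul, mul_add, smul_mul_assoc, mul_smul_comm, zero_mul, mul_zero]
  push_cast
  module

theorem pbComm_ff_bf (α β γ : J) (i : I) :
    pbComm (pbComm (f α 1) (f β (-1))) (pbAComm (b i 1) (f γ (-1)))
      = (-2 * kd α γ) • pbAComm (b i 1) (f β (-1)) := by
  rw [pbComm_pbAComm, h.rel_fff α β γ 1 (-1) (-1) (.inl rfl) (.inr rfl) (.inr rfl),
    h.rel_ffb α β i 1 (-1) 1 (.inl rfl) (.inr rfl) (.inl rfl)]
  simp only [pbAComm, sub_mul, mul_sub, smul_mul_assoc, mul_smul_comm, zero_mul, mul_zero]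
  push_cast
  module

theorem pbComm_ff_fb (α β γ : J) (i : I) :
    pbComm (pbComm (f α 1) (f β (-1))) (pbAComm (f γ 1) (b i (-1)))
      = (2 * kd β γ) • pbAComm (f α 1) (b i (-1)) := by
  rw [pbComm_pbAComm, h.rel_fff α β γ 1 (-1) 1 (.inl rfl) (.inr rfl) (.inl rfl),
    h.rel_ffb α β i 1 (-1) (-1) (.inl rfl) (.inr rfl) (.inr rfl)]
  simp only [pbAComm, sub_mul, mul_sub, smul_mul_assoc, mul_smul_comm, zero_mul, mul_zero]
  push_cast
  module

end PBFRelations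

end Brackets

theorem inv_two_mul_mul_two (a : ℂ) : 2⁻¹ * a * 2 = a := by ring

section Realization

variable {𝒜 : Type*} [Ring 𝒜] [Algebra ℂ 𝒜] {m n : ℕ} {b : Fin m → ℤ → 𝒜} {f : Fin n → ℤ → 𝒜}
  (A : Matrix (Fin m) (Fin m) ℂ) (D : Matrix (Fin n) (Fin n) ℂ)

theorem PBFRelations.pbComm_J0_bf (h : PBFRelations b f) (i : Fin m) (γ : Fin n) :
    pbComm (J0 b f A D) (pbAComm (b i 1) (f γ (-1)))
      = ∑ k, A k i • pbAComm (b k 1) (f γ (-1)) - ∑ β, D γ β • pbAComm (b i 1) (f β (-1)) := by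
  simp only [J0, one_div, smul_sum, smul_smul, pbComm_add_left, pbComm_sum_left,
    pbComm_smul_left, h.pbComm_bb_bf, h.pbComm_ff_bf, kd, mul_ite, mul_one, mul_zero, ite_smul,
    zero_smul, smul_ite, smul_zero, sum_ite_eq', mem_univ, ↓reduceIte, neg_smul, smul_neg,
    sum_ite_irrel, sum_neg_distrib, sum_const_zero, inv_two_mul_mul_two, sub_eq_add_neg]

theorem PBFRelations.pbComm_J0_fb (h : PBFRelations b f) (i : Fin m) (γ : Fin n) :
    pbComm (J0 b f A D) (pbAComm (f γ 1) (b i (-1)))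
      = ∑ β, D β γ • pbAComm (f β 1) (b i (-1)) - ∑ l, A i l • pbAComm (f γ 1) (b l (-1)) := by
  simp only [J0, one_div, smul_sum, smul_smul, pbComm_add_left, pbComm_sum_left,
    pbComm_smul_left, h.pbComm_bb_fb, h.pbComm_ff_fb, kd, mul_ite, mul_one, mul_zero, ite_smul,
    zero_smul, smul_ite, smul_zero, sum_ite_eq', mem_univ, ↓reduceIte, neg_smul, smul_neg,
    sum_ite_irrel, sum_neg_distrib, sum_const_zero, inv_two_mul_mul_two, sub_eq_add_neg]
  exact add_comm _ _

-- Both double sums run over the row index of their coefficient matrix first, the order in which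
-- `Matrix.sum_sum_smul_sum_smul_left/right` collect the coefficients.
theorem J1_eq_smul_add (b : Fin m → ℤ → 𝒜) (f : Fin n → ℤ → 𝒜)
    (B : Matrix (Fin m) (Fin n) ℂ) (C : Matrix (Fin n) (Fin m) ℂ) :
    J1 b f B C = (1 / 2 : ℂ) • (∑ k, ∑ α, B k α • pbAComm (b k 1) (f α (-1))
      + ∑ α, ∑ k, C α k • pbAComm (f α 1) (b k (-1))) := by
  rw [J1, sum_comm (γ := Fin n), ← sum_add_distrib]
  simp only [sum_add_distrib]

end Realization

theorem J0_comm_J1_general {𝒜 : Type*} [Ring 𝒜] [Algebra ℂ 𝒜] {m n : ℕ}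
    (b : Fin m → ℤ → 𝒜) (f : Fin n → ℤ → 𝒜) (h : PBFRelations b f)
    (A : Matrix (Fin m) (Fin m) ℂ) (D : Matrix (Fin n) (Fin n) ℂ)
    (B : Matrix (Fin m) (Fin n) ℂ) (C : Matrix (Fin n) (Fin m) ℂ) :
    pbComm (J0 b f A D) (J1 b f B C) = J1 b f (A * B - B * D) (D * C - C * A) := by
  simp only [J1_eq_smul_add, pbComm_smul_right, pbComm_add_right, pbComm_sum_right, h.pbComm_J0_bf,
    h.pbComm_J0_fb, smul_sub, sum_sub_distrib, Matrix.sum_sum_smul_sum_smul_left,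
    Matrix.sum_sum_smul_sum_smul_right, Matrix.sub_apply, sub_smul]

/-- The paraparticle realization map preserves the bracket of an even with an odd element. -/
theorem J0_comm_J1 {𝒜 : Type*} [Ring 𝒜] [Algebra ℂ 𝒜] {m n : ℕ}
    (hm : 0 < m) (hn : 0 < n)
    (b : Fin m → ℤ → 𝒜) (f : Fin n → ℤ → 𝒜) (h : PBFRelations b f)
    (A : Matrix (Fin m) (Fin m) ℂ) (D : Matrix (Fin n) (Fin n) ℂ)
    (B : Matrix (Fin m) (Fin n) ℂ) (C : Matrix (Fin n) (Fin m) ℂ) :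
    pbComm (J0 b f A D) (J1 b f B C) = J1 b f (A * B - B * D) (D * C - C * A) :=
  J0_comm_J1_general b f h A D B C
end
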